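/- arXiv:2003.13572 — 2 statements merged into one kernel-verified Lean document; each statement's English description precedes it below -/
import Mathlib

section
/- For every L > 0 and every δ ∈ (0, 2], there exists a constant C > 0 such that the following holds: for all real numbers a, b with a ≥ L and b ≥ L, every real number c with c ≤ 1 and 1 + c ≥ δ, and every real number d ≥ 0 satisfying cosh d = cosh a · cosh b − sinh a · sinh b · c, one has d < a + b − C. -/
/-!
By the hyperbolic law of cosines, `cosh d = cosh (a + b) - sinh a * sinh b * (1 + c)`.
For `a, b ≥ L` one has `sinh a * sinh b ≥ (tanh L ^ 2 / 2) * cosh (a + b)`, so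
`cosh d ≤ κ * cosh (a + b)` with `κ = 1 - δ * tanh L ^ 2 / 2 ∈ (0, 1)`. Since
`cosh (x - C) ≥ exp (-C) * cosh x` for `C ≥ 0`, this gives `d ≤ a + b + log κ`,
and `C = -log κ / 2` makes the inequality strict.
-/

open Real

namespace Real

lemma tanh_pos {x : ℝ} (hx : 0 < x) : 0 < tanh x := by
  rw [tanh_eq_sinh_div_cosh]
  exact div_pos (sinh_pos_iff.mpr hx) (cosh_pos x)

lemma tanh_nonneg {x : ℝ} (hx : 0 ≤ x) : 0 ≤ tanh x := by
  rw [tanh_eq_sinh_div_cosh]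
  exact div_nonneg (sinh_nonneg_iff.mpr hx) (cosh_pos x).le

lemma tanh_mul_cosh_le_sinh {x y : ℝ} (h : y ≤ x) : tanh y * cosh x ≤ sinh x := by
  have hsub : 0 ≤ sinh (x - y) := sinh_nonneg_iff.mpr (sub_nonneg.mpr h)
  rw [sinh_sub] at hsub
  rw [tanh_eq_sinh_div_cosh, div_mul_eq_mul_div, div_le_iff₀ (cosh_pos y)]
  linarith

lemma cosh_add_le_two_mul_cosh_mul_cosh (a b : ℝ) : cosh (a + b) ≤ 2 * (cosh a * cosh b) := by
  have hsub : 1 ≤ cosh (a - b) := one_le_cosh _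
  rw [cosh_sub] at hsub
  rw [cosh_add]
  linarith

lemma tanh_sq_mul_cosh_add_le {L a b : ℝ} (hL : 0 ≤ L) (ha : L ≤ a) (hb : L ≤ b) :
    tanh L ^ 2 * cosh (a + b) ≤ 2 * (sinh a * sinh b) := by
  calc tanh L ^ 2 * cosh (a + b)
      ≤ tanh L ^ 2 * (2 * (cosh a * cosh b)) := by
        gcongr
        exact cosh_add_le_two_mul_cosh_mul_cosh a b
    _ = 2 * ((tanh L * cosh a) * (tanh L * cosh b)) := by ring
    _ ≤ 2 * (sinh a * sinh b) := by
        gcongr 2 * ?_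
        exact mul_le_mul (tanh_mul_cosh_le_sinh ha) (tanh_mul_cosh_le_sinh hb)
          (mul_nonneg (tanh_nonneg hL) (cosh_pos b).le) (sinh_nonneg_iff.mpr (hL.trans ha))

lemma cosh_le_exp_abs (x : ℝ) : cosh x ≤ exp |x| := by
  rw [← cosh_abs, cosh_eq]
  have : exp (-|x|) ≤ exp |x| := exp_le_exp.mpr (by linarith [abs_nonneg x])
  linarith

lemma exp_neg_mul_cosh_le_cosh_sub {C : ℝ} (hC : 0 ≤ C) (x : ℝ) :
    exp (-C) * cosh x ≤ cosh (x - C) := by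
  have hpos : exp (-C) * exp x = exp (x - C) := by rw [← exp_add]; ring_nf
  have hneg : exp (-C) * exp (-x) ≤ exp (-(x - C)) := by
    rw [← exp_add]
    exact exp_le_exp.mpr (by linarith)
  rw [cosh_eq, cosh_eq]
  linarith

lemma abs_le_abs_sub_of_cosh_le_exp_neg_mul_cosh {C d x : ℝ} (hC : 0 ≤ C)
    (h : cosh d ≤ exp (-C) * cosh x) : |d| ≤ |x| - C := by
  rw [← cosh_abs x] at h
  have hCx : C ≤ |x| := by
    by_contra! hlt
    have : exp (-C) * cosh |x| < 1 := calc
      exp (-C) * cosh |x| ≤ exp (-C) * exp |x| := by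
        gcongr
        simpa only [abs_abs] using cosh_le_exp_abs |x|
      _ = exp (|x| - C) := by rw [← exp_add]; ring_nf
      _ < 1 := exp_lt_one_iff.mpr (by linarith)
    linarith [one_le_cosh d]
  have := cosh_le_cosh.mp (h.trans (exp_neg_mul_cosh_le_cosh_sub hC |x|))
  rwa [abs_of_nonneg (sub_nonneg.mpr hCx)] at this

lemma cosh_mul_cosh_sub_sinh_mul_sinh_mul (a b c : ℝ) :
    cosh a * cosh b - sinh a * sinh b * c = cosh (a + b) - sinh a * sinh b * (1 + c) := by
  rw [cosh_add]
  ring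

end Real

/-- The analytic core of Lemma 3.2: in a hyperbolic triangle with two sides of
lengths `a, b ≥ L` meeting at angle `β` with `c = cos β` satisfying
`1 + c ≥ δ > 0`, the third side `d` (given by the hyperbolic law of cosines)
is shorter than `a + b` by a definite constant `C = C(L, δ)`. -/
theorem hyperbolic_law_of_cosines_shortening
    (L : ℝ) (hL : 0 < L) (δ : ℝ) (hδ : δ ∈ Set.Ioc 0 2) :
    ∃ C : ℝ, 0 < C ∧
      ∀ a b c d : ℝ, L ≤ a → L ≤ b → c ≤ 1 → δ ≤ 1 + c → 0 ≤ d →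
        Real.cosh d = Real.cosh a * Real.cosh b - Real.sinh a * Real.sinh b * c →
        d < a + b - C := by
  obtain ⟨hδ0, hδ2⟩ := hδ
  set t := tanh L
  have ht0 : 0 < t ^ 2 := pow_pos (tanh_pos hL) 2
  have ht1 : t ^ 2 < 1 := tanh_sq_lt_one L
  set κ := 1 - δ * t ^ 2 / 2 with hκ
  have hκ0 : 0 < κ := by nlinarith
  have hlog : log κ < 0 := log_neg hκ0 (by nlinarith)
  refine ⟨-log κ / 2, by linarith, fun a b c d ha hb _ hc hd hcosh => ?_⟩
  have hsinh : 0 ≤ sinh a * sinh b :=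
    mul_nonneg (sinh_nonneg_iff.mpr (by linarith)) (sinh_nonneg_iff.mpr (by linarith))
  have hbound : cosh d ≤ exp (-(-log κ)) * cosh (a + b) := calc
    cosh d = cosh (a + b) - sinh a * sinh b * (1 + c) := by
      rw [hcosh, cosh_mul_cosh_sub_sinh_mul_sinh_mul]
    _ ≤ cosh (a + b) - δ / 2 * (2 * (sinh a * sinh b)) := by nlinarith
    _ ≤ cosh (a + b) - δ / 2 * (t ^ 2 * cosh (a + b)) := by
      have := tanh_sq_mul_cosh_add_le hL.le ha hb
      gcongr
    _ = exp (-(-log κ)) * cosh (a + b) := by rw [neg_neg, exp_log hκ0]; ring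
  have hd_le := abs_le_abs_sub_of_cosh_le_exp_neg_mul_cosh (by linarith) hbound
  rw [abs_of_nonneg hd, abs_of_nonneg (by linarith)] at hd_le
  linarith
end

section
/- Let Π be a group and let j, ρ : Π → SL(2, ℝ) be group homomorphisms. Suppose f : ℍ → ℍ is a 1-Lipschitz map that is (j, ρ)-equivariant, i.e. f(j(γ) · z) = ρ(γ) · f(z) for all γ ∈ Π and z ∈ ℍ. Then for every γ ∈ Π, inf_{z ∈ ℍ} dist(ρ(γ) · z, z) ≤ inf_{z ∈ ℍ} dist(j(γ) · z, z); that is, the ρ-translation length of every element is at most its j-translation length. -/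
open scoped UpperHalfPlane MatrixGroups

theorem iInf_dist_smul_le_of_lipschitzWith_one {M N X Y : Type*} [PseudoMetricSpace X]
    [PseudoMetricSpace Y] [Nonempty X] [SMul M X] [SMul N Y] {a : M} {b : N} {f : X → Y}
    (hf : LipschitzWith 1 f) (hfab : ∀ x, f (a • x) = b • f x) :
    (⨅ y : Y, dist (b • y) y) ≤ ⨅ x : X, dist (a • x) x := by
  refine le_ciInf fun x => ?_
  have hbdd : BddBelow (Set.range fun y : Y => dist (b • y) y) :=
    ⟨0, Set.forall_mem_range.2 fun _ => dist_nonneg⟩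
  calc (⨅ y : Y, dist (b • y) y) ≤ dist (b • f x) (f x) := ciInf_le hbdd (f x)
    _ = dist (f (a • x)) (f x) := by rw [hfab]
    _ ≤ dist (a • x) x := by
      simpa only [NNReal.coe_one, one_mul] using hf.dist_le_mul (a • x) x

/-- If `f : ℍ → ℍ` is a 1-Lipschitz `(j, ρ)`-equivariant map between two
`SL(2, ℝ)`-representations of a group `Γ` (the surface group `Π` of the paper;
`Π` is a reserved token in Lean), then the `ρ`-translation length of every
element is at most its `j`-translation length (domination). -/
theorem domination_of_equivariant_one_lipschitz
    {Γ : Type*} [Group Γ] (j ρ : Γ →* SL(2, ℝ))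
    (f : ℍ → ℍ) (hf : LipschitzWith 1 f)
    (heq : ∀ (γ : Γ) (z : ℍ), f (j γ • z) = ρ γ • f z) (γ : Γ) :
    (⨅ z : ℍ, dist (ρ γ • z) z) ≤ ⨅ z : ℍ, dist (j γ • z) z :=
  iInf_dist_smul_le_of_lipschitzWith_one hf (heq γ)
end
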